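/- arXiv:2505.22459 — 5 statements merged into one kernel-verified Lean document; each statement's English description precedes it below -/
import Mathlib

section
/- Let τ : {1,…,n} → {1,…,K} have every community nonempty, with n_min = min_k |{i : τ_i = k}|. Let Y_1,…,Y_K ∈ ℝ^d be distinct vectors with min_{k ≠ ℓ} ‖Y_k − Y_ℓ‖ ≥ 4 r_* for some r_* > 0, and set U_i = Y_{τ_i}. Let Û_1,…,Û_n ∈ ℝ^d satisfy max_i ‖Û_i − U_i‖ < r_*/2 and (Σ_i ‖Û_i − U_i‖²)^{1/2} < r_* √(n_min) / 2. Then every global minimizer {τ̂_i} of the K-means objective Q_1({t_i}; {Û_i}) over {t_i} ∈ {1,…,K}^n recovers τ exactly up to relabeling: there exists a bijection σ : {1,…,K} → {1,…,K} such that τ̂_i = σ(τ_i) for all i. -/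
open Finset

/-!
Comparing with the true assignment, a minimizer has cost below `r_*² n_min / 4`, so every true
community contains a point within `r_*/2` of its fitted centroid; that centroid is then within
`r_*` of the community's center `Y_k`, and by separation distinct communities pick distinct
fitted clusters, giving the relabeling `σ`. A minimizer assigns each `Û_i` to a nearest
centroid, which is therefore within `3 r_*/2` of `Û_i`; if it were the centroid of cluster `σ l`
then `‖Y_{τ_i} − Y_l‖ < 3 r_*`, forcing `l = τ_i`.
-/

/-- The centroid of the points `V i` assigned to cluster `k` by the assignment `t`. -/
noncomputable def centroid {n K d : ℕ} (t : Fin n → Fin K)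
    (V : Fin n → EuclideanSpace ℝ (Fin d)) (k : Fin K) : EuclideanSpace ℝ (Fin d) :=
  (((Finset.univ.filter fun i => t i = k).card : ℝ))⁻¹ •
    ∑ i ∈ Finset.univ.filter (fun i => t i = k), V i

/-- The K-means objective `Q₁({t_i}; {V_i}) = Σ_k Σ_{i : t_i = k} ‖V_i − 𝒞_k‖²`. -/
noncomputable def Q1 {n K d : ℕ} (t : Fin n → Fin K)
    (V : Fin n → EuclideanSpace ℝ (Fin d)) : ℝ :=
  ∑ k : Fin K, ∑ i ∈ Finset.univ.filter (fun i => t i = k), ‖V i - centroid t V k‖ ^ 2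

section Mean

variable {ι E : Type*} [NormedAddCommGroup E] [InnerProductSpace ℝ E]

theorem sum_sub_mean_eq_zero (s : Finset ι) (V : ι → E) :
    ∑ i ∈ s, (V i - (#s : ℝ)⁻¹ • ∑ j ∈ s, V j) = 0 := by
  rcases s.eq_empty_or_nonempty with rfl | hs
  · simp
  have hcard : (#s : ℝ) ≠ 0 := by exact_mod_cast hs.card_pos.ne'
  rw [sum_sub_distrib, sum_const, ← Nat.cast_smul_eq_nsmul ℝ, smul_smul, mul_inv_cancel₀ hcard,
    one_smul, sub_self]

theorem sum_norm_sub_sq_eq_sum_norm_sub_mean_sq_add (s : Finset ι) (V : ι → E) (c : E) :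
    ∑ i ∈ s, ‖V i - c‖ ^ 2 =
      ∑ i ∈ s, ‖V i - (#s : ℝ)⁻¹ • ∑ j ∈ s, V j‖ ^ 2 +
        #s * ‖(#s : ℝ)⁻¹ • ∑ j ∈ s, V j - c‖ ^ 2 := by
  set μ := (#s : ℝ)⁻¹ • ∑ j ∈ s, V j
  have hsplit (i : ι) :
      ‖V i - c‖ ^ 2 = ‖V i - μ‖ ^ 2 + 2 * inner ℝ (V i - μ) (μ - c) + ‖μ - c‖ ^ 2 := by
    rw [← norm_add_sq_real, sub_add_sub_cancel]
  have hμ : ∑ i ∈ s, (V i - μ) = 0 := sum_sub_mean_eq_zero s V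
  simp only [hsplit, sum_add_distrib, ← mul_sum, ← sum_inner, hμ, inner_zero_left, sum_const,
    nsmul_eq_mul]
  ring

theorem sum_norm_sub_mean_sq_le (s : Finset ι) (V : ι → E) (c : E) :
    ∑ i ∈ s, ‖V i - (#s : ℝ)⁻¹ • ∑ j ∈ s, V j‖ ^ 2 ≤ ∑ i ∈ s, ‖V i - c‖ ^ 2 := by
  rw [sum_norm_sub_sq_eq_sum_norm_sub_mean_sq_add s V c]
  exact le_add_of_nonneg_right (by positivity)

end Mean

section KMeans

variable {n K d : ℕ}

theorem Q1_eq_sum (t : Fin n → Fin K) (V : Fin n → EuclideanSpace ℝ (Fin d)) :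
    Q1 t V = ∑ i, ‖V i - centroid t V (t i)‖ ^ 2 := by
  rw [Q1, ← sum_fiberwise univ t]
  refine sum_congr rfl fun k _ => sum_congr rfl fun i hi => ?_
  rw [(mem_filter.mp hi).2]

theorem Q1_le_sum (t : Fin n → Fin K) (V : Fin n → EuclideanSpace ℝ (Fin d))
    (c : Fin K → EuclideanSpace ℝ (Fin d)) :
    Q1 t V ≤ ∑ i, ‖V i - c (t i)‖ ^ 2 := by
  rw [Q1, ← sum_fiberwise univ t]
  refine sum_le_sum fun k _ => ?_
  calc ∑ i with t i = k, ‖V i - centroid t V k‖ ^ 2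
      ≤ ∑ i with t i = k, ‖V i - c k‖ ^ 2 := sum_norm_sub_mean_sq_le _ V (c k)
    _ = ∑ i with t i = k, ‖V i - c (t i)‖ ^ 2 :=
        sum_congr rfl fun i hi => by rw [(mem_filter.mp hi).2]

/-- Compare with the assignment moving only the point `i` to cluster `k`, scored with the old
centroids, which refitting can only improve. -/
theorem norm_sub_centroid_le_of_forall_Q1_le {t : Fin n → Fin K}
    {V : Fin n → EuclideanSpace ℝ (Fin d)} (hmin : ∀ t' : Fin n → Fin K, Q1 t V ≤ Q1 t' V)
    (i : Fin n) (k : Fin K) : ‖V i - centroid t V (t i)‖ ≤ ‖V i - centroid t V k‖ := by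
  set C := centroid t V
  have hmoved : Q1 (Function.update t i k) V ≤
      ∑ j ∈ univ.erase i, ‖V j - C (t j)‖ ^ 2 + ‖V i - C k‖ ^ 2 := by
    refine (Q1_le_sum _ V C).trans_eq ?_
    rw [← add_sum_erase _ _ (mem_univ i), add_comm, Function.update_self]
    congr 1
    exact sum_congr rfl fun j hj => by rw [Function.update_of_ne (ne_of_mem_erase hj)]
  have hstay : Q1 t V = ∑ j ∈ univ.erase i, ‖V j - C (t j)‖ ^ 2 + ‖V i - C (t i)‖ ^ 2 := by
    rw [Q1_eq_sum, ← add_sum_erase _ _ (mem_univ i), add_comm]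
  have := hmin (Function.update t i k)
  exact pow_le_pow_iff_left₀ (norm_nonneg _) (norm_nonneg _) two_ne_zero |>.mp (by linarith)

theorem exists_mem_norm_sub_centroid_lt_of_Q1_lt {t : Fin n → Fin K}
    {V : Fin n → EuclideanSpace ℝ (Fin d)} {s : Finset (Fin n)} {a : ℝ} (ha : 0 ≤ a)
    (h : Q1 t V < #s * a ^ 2) : ∃ i ∈ s, ‖V i - centroid t V (t i)‖ < a := by
  have hsum : ∑ i ∈ s, ‖V i - centroid t V (t i)‖ ^ 2 < ∑ _i ∈ s, a ^ 2 := by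
    rw [sum_const, nsmul_eq_mul]
    refine lt_of_le_of_lt ?_ (Q1_eq_sum t V ▸ h)
    exact sum_le_univ_sum_of_nonneg fun _ => by positivity
  obtain ⟨i, hi, hlt⟩ := exists_lt_of_sum_lt hsum
  exact ⟨i, hi, lt_of_pow_lt_pow_left₀ 2 ha hlt⟩

end KMeans

theorem exists_perm_eq_comp_of_nearest_centers {ι κ X : Type*} [Finite κ] [PseudoMetricSpace X]
    {r : ℝ} {Y C : κ → X} {x : ι → X} {τ τh : ι → κ}
    (hY : ∀ k l, k ≠ l → 4 * r ≤ dist (Y k) (Y l))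
    (hx : ∀ i, dist (x i) (Y (τ i)) < r / 2)
    (hcover : ∀ k, ∃ i, τ i = k ∧ dist (x i) (C (τh i)) < r / 2)
    (hnearest : ∀ i k, dist (x i) (C (τh i)) ≤ dist (x i) (C k)) :
    ∃ σ : Equiv.Perm κ, ∀ i, τh i = σ (τ i) := by
  have eq_of_dist_lt {k l : κ} (h : dist (Y k) (Y l) < 4 * r) : k = l := by
    by_contra hkl
    exact (hY k l hkl).not_gt h
  choose I hIτ hIC using hcover
  set m : κ → κ := fun k => τh (I k)
  have hm (k : κ) : dist (C (m k)) (Y k) < r := by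
    have := hx (I k)
    rw [hIτ] at this
    calc dist (C (m k)) (Y k) ≤ dist (C (m k)) (x (I k)) + dist (x (I k)) (Y k) :=
          dist_triangle _ _ _
      _ < r / 2 + r / 2 := by rw [dist_comm]; gcongr; exact hIC k
      _ = r := add_halves r
  have hinj : Function.Injective m := fun k l hkl => eq_of_dist_lt <| by
    have hr : 0 < r := dist_nonneg.trans_lt (hm k)
    calc dist (Y k) (Y l) ≤ dist (Y k) (C (m k)) + dist (C (m l)) (Y l) := by
          rw [hkl]; exact dist_triangle _ _ _
      _ < r + r := by rw [dist_comm]; gcongr <;> apply hm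
      _ < 4 * r := by linarith
  let σ := Equiv.ofBijective m (Finite.injective_iff_bijective.mp hinj)
  refine ⟨σ, fun i => ?_⟩
  obtain ⟨l, hl⟩ : ∃ l, m l = τh i := σ.surjective (τh i)
  suffices τ i = l by rw [← hl, this]; rfl
  have hr : 0 < r := by linarith [dist_nonneg.trans_lt (hx i)]
  have hassigned : dist (x i) (C (τh i)) < r / 2 + r :=
    calc dist (x i) (C (τh i)) ≤ dist (x i) (C (m (τ i))) := hnearest i _
      _ ≤ dist (x i) (Y (τ i)) + dist (Y (τ i)) (C (m (τ i))) := dist_triangle _ _ _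
      _ < r / 2 + r := by rw [dist_comm (Y _)]; gcongr; exacts [hx i, hm _]
  apply eq_of_dist_lt
  calc dist (Y (τ i)) (Y l) ≤ dist (Y (τ i)) (x i) + dist (x i) (C (m l)) + dist (C (m l)) (Y l) :=
        dist_triangle4 _ _ _ _
    _ < r / 2 + (r / 2 + r) + r := by
        rw [dist_comm]
        gcongr
        exacts [hx i, hl ▸ hassigned, hm l]
    _ < 4 * r := by linarith

theorem stmt4_general {n K d : ℕ} (τ : Fin n → Fin K)
    (nmin : ℕ) (hnmin : nmin = sInf (Set.range fun k => (Finset.univ.filter fun i => τ i = k).card))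
    (Y : Fin K → EuclideanSpace ℝ (Fin d)) (rstar : ℝ) (hrstar : 0 < rstar)
    (hYsep : ∀ k l, k ≠ l → 4 * rstar ≤ ‖Y k - Y l‖)
    (U Uh : Fin n → EuclideanSpace ℝ (Fin d)) (hU : ∀ i, U i = Y (τ i))
    (hclose : ∀ i, ‖Uh i - U i‖ < rstar / 2)
    (hfrob : Real.sqrt (∑ i, ‖Uh i - U i‖ ^ 2) < rstar * Real.sqrt nmin / 2)
    (τh : Fin n → Fin K) (hmin : ∀ t : Fin n → Fin K, Q1 τh Uh ≤ Q1 t Uh) :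
    ∃ σ : Equiv.Perm (Fin K), ∀ i, τh i = σ (τ i) := by
  simp only [hU] at hclose hfrob
  have hQ : Q1 τh Uh < rstar ^ 2 * nmin / 4 := by
    have hpos : 0 < rstar * √nmin / 2 := (Real.sqrt_nonneg _).trans_lt hfrob
    rw [Real.sqrt_lt' hpos, div_pow, mul_pow, Real.sq_sqrt (Nat.cast_nonneg _)] at hfrob
    exact (hmin τ).trans_lt ((Q1_le_sum τ Uh Y).trans_lt (by linarith))
  refine exists_perm_eq_comp_of_nearest_centers (C := centroid τh Uh)
    (by simpa only [dist_eq_norm] using hYsep) (by simpa only [dist_eq_norm] using hclose)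
    (fun k => ?_) (by simpa only [dist_eq_norm] using norm_sub_centroid_le_of_forall_Q1_le hmin)
  have hsize : nmin ≤ #{i | τ i = k} := hnmin ▸ Nat.sInf_le ⟨k, rfl⟩
  have hQ' : Q1 τh Uh < #{i | τ i = k} * (rstar / 2) ^ 2 := by
    refine hQ.trans_le ?_
    have : (nmin : ℝ) ≤ #{i | τ i = k} := by exact_mod_cast hsize
    nlinarith
  obtain ⟨i, hi, hlt⟩ := exists_mem_norm_sub_centroid_lt_of_Q1_lt (half_pos hrstar).le hQ'
  exact ⟨i, (mem_filter.mp hi).2, by rwa [dist_eq_norm]⟩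

/-- If the true latent positions `U_i = Y_{τ_i}` come from well-separated
centers (`min_{k ≠ ℓ} ‖Y_k − Y_ℓ‖ ≥ 4 r_*`), all communities are nonempty (of size at least
`n_min`), and `Û` is close to `U` both entrywise (`max_i ‖Û_i − U_i‖ < r_*/2`) and in the
Frobenius sense (`‖Û − U‖_F < r_* √n_min / 2`), then every global minimizer `τ̂` of the
K-means objective `Q₁(·; {Û_i})` recovers `τ` exactly up to a relabeling of communities. -/
theorem stmt4 {n K d : ℕ} (τ : Fin n → Fin K) (hτ : Function.Surjective τ)
    (nmin : ℕ) (hnmin : nmin = sInf (Set.range fun k => (Finset.univ.filter fun i => τ i = k).card))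
    (Y : Fin K → EuclideanSpace ℝ (Fin d)) (rstar : ℝ) (hrstar : 0 < rstar)
    (hYsep : ∀ k l, k ≠ l → 4 * rstar ≤ ‖Y k - Y l‖)
    (U Uh : Fin n → EuclideanSpace ℝ (Fin d)) (hU : ∀ i, U i = Y (τ i))
    (hclose : ∀ i, ‖Uh i - U i‖ < rstar / 2)
    (hfrob : Real.sqrt (∑ i, ‖Uh i - U i‖ ^ 2) < rstar * Real.sqrt nmin / 2)
    (τh : Fin n → Fin K) (hmin : ∀ t : Fin n → Fin K, Q1 τh Uh ≤ Q1 t Uh) :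
    ∃ σ : Equiv.Perm (Fin K), ∀ i, τh i = σ (τ i) :=
  stmt4_general τ nmin hnmin Y rstar hrstar hYsep U Uh hU hclose hfrob τh hmin
end

section
/- Under the DCBM latent-position structure, for every community k and every vector c ∈ ℝ^K, Σ_{i: τ_i = k} ‖U_i − c‖² ≥ (1/n_k) Σ_{i: τ_i = k} (θ_i − θ̄_k)², where θ̄_k is the average of θ_i over 𝒢_k. -/
open Finset Matrix

/-!
On community `k` every `U i` is the multiple `θ i / r` of the unit row `H k`, where
`r² = ∑_{𝒢_k} θ² ≤ n_k` because `θ ≤ 1`. Projecting onto `H k` gives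
`‖U i - c‖² ≥ (θ i / r - a)²` with `a = ⟪H k, c⟫`, and
`∑ (θ i / r - a)² = r⁻² ∑ (θ i - r a)² ≥ r⁻² ∑ (θ i - θ̄_k)² ≥ n_k⁻¹ ∑ (θ i - θ̄_k)²`,
since the mean minimises the sum of squared deviations.
-/

theorem sum_sq_sub_mean_le {ι : Type*} (s : Finset ι) (x : ι → ℝ) (b : ℝ) :
    ∑ i ∈ s, (x i - (∑ j ∈ s, x j) / #s) ^ 2 ≤ ∑ i ∈ s, (x i - b) ^ 2 := by
  rcases s.eq_empty_or_nonempty with rfl | hs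
  · simp
  set m := (∑ j ∈ s, x j) / #s
  have hcard : (#s : ℝ) ≠ 0 := by exact_mod_cast hs.card_pos.ne'
  have hdev : ∑ i ∈ s, (x i - m) = 0 := by
    rw [sum_sub_distrib, sum_const, nsmul_eq_mul, mul_div_cancel₀ _ hcard, sub_self]
  have hsplit : ∑ i ∈ s, (x i - b) ^ 2
      = ∑ i ∈ s, (x i - m) ^ 2 + 2 * (m - b) * ∑ i ∈ s, (x i - m) + #s * (m - b) ^ 2 := by
    rw [mul_sum, ← nsmul_eq_mul, ← sum_const, ← sum_add_distrib, ← sum_add_distrib]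
    exact sum_congr rfl fun i _ => by ring
  rw [hsplit, hdev]
  nlinarith [sq_nonneg (m - b), Nat.cast_nonneg (α := ℝ) #s]

theorem div_card_mul_sum_sq_sub_mean_le {ι : Type*} (s : Finset ι) (x : ι → ℝ) {r : ℝ}
    (hr : 0 < r) (hrs : r ^ 2 ≤ #s) (a : ℝ) :
    1 / #s * ∑ i ∈ s, (x i - (∑ j ∈ s, x j) / #s) ^ 2 ≤ ∑ i ∈ s, (x i / r - a) ^ 2 :=
  calc 1 / #s * ∑ i ∈ s, (x i - (∑ j ∈ s, x j) / #s) ^ 2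
      ≤ 1 / r ^ 2 * ∑ i ∈ s, (x i - (∑ j ∈ s, x j) / #s) ^ 2 := by gcongr
    _ ≤ 1 / r ^ 2 * ∑ i ∈ s, (x i - r * a) ^ 2 :=
        mul_le_mul_of_nonneg_left (sum_sq_sub_mean_le s x (r * a)) (by positivity)
    _ = ∑ i ∈ s, (x i / r - a) ^ 2 := by
        rw [mul_sum]
        exact sum_congr rfl fun i _ => by field_simp

theorem sq_sub_inner_le_norm_smul_sub_sq {E : Type*} [NormedAddCommGroup E]
    [InnerProductSpace ℝ E] {h : E} (hh : ‖h‖ = 1) (t : ℝ) (c : E) :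
    (t - inner ℝ h c) ^ 2 ≤ ‖t • h - c‖ ^ 2 := by
  have hcs : inner ℝ h c ^ 2 ≤ ‖c‖ ^ 2 := by
    have := abs_real_inner_le_norm h c
    rw [hh, one_mul] at this
    exact sq_le_sq' (abs_le.mp this).1 (abs_le.mp this).2
  rw [norm_sub_sq_real, norm_smul, real_inner_smul_left, mul_pow, hh, Real.norm_eq_abs, sq_abs]
  nlinarith

theorem norm_row_eq_one_of_mul_transpose_eq_one {m : Type*} [Fintype m] [DecidableEq m]
    {H : Matrix m m ℝ} (hH : H * Hᵀ = 1) (k : m) :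
    ‖(WithLp.equiv 2 (m → ℝ)).symm (H k)‖ = 1 := by
  have hdiag : (H * Hᵀ) k k = 1 := by rw [hH, one_apply_eq]
  rw [EuclideanSpace.norm_eq, Real.sqrt_eq_one]
  simpa [mul_apply, sq] using hdiag

theorem sum_sq_le_card {ι : Type*} (s : Finset ι) {x : ι → ℝ} (hx : ∀ i ∈ s, |x i| ≤ 1) :
    ∑ i ∈ s, x i ^ 2 ≤ #s := by
  rw [← nsmul_one, ← sum_const]
  exact sum_le_sum fun i hi => (sq_le_one_iff_abs_le_one _).mpr (hx i hi)

theorem stmt7_general {n K : ℕ} (τ : Fin n → Fin K)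
    (θ : Fin n → ℝ) (hθ : ∀ i, θ i ∈ Set.Ioc (0 : ℝ) 1)
    (H : Matrix (Fin K) (Fin K) ℝ) (hH : H * Hᵀ = 1)
    (θt : Fin n → ℝ)
    (hθt : ∀ i, θt i =
      θ i / Real.sqrt (∑ j ∈ Finset.univ.filter (fun l => τ l = τ i), θ j ^ 2))
    (U : Fin n → EuclideanSpace ℝ (Fin K))
    (hU : ∀ i, U i = θt i • (WithLp.equiv 2 (Fin K → ℝ)).symm (H (τ i))) :
    ∀ (k : Fin K) (c : EuclideanSpace ℝ (Fin K)),
      (1 / ((Finset.univ.filter fun i => τ i = k).card : ℝ)) *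
          ∑ i ∈ Finset.univ.filter (fun i => τ i = k),
            (θ i - (∑ j ∈ Finset.univ.filter (fun l => τ l = k), θ j) /
                ((Finset.univ.filter fun l => τ l = k).card : ℝ)) ^ 2
        ≤ ∑ i ∈ Finset.univ.filter (fun i => τ i = k), ‖U i - c‖ ^ 2 := by
  intro k c
  set G := Finset.univ.filter fun i => τ i = k
  rcases G.eq_empty_or_nonempty with hG | ⟨i₀, hi₀⟩
  · simp [hG]
  set h := (WithLp.equiv 2 (Fin K → ℝ)).symm (H k)
  have hpos : 0 < ∑ j ∈ G, θ j ^ 2 := sum_pos (fun j _ => pow_pos (hθ j).1 2) ⟨i₀, hi₀⟩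
  have hUG : ∀ i ∈ G, U i = (θ i / Real.sqrt (∑ j ∈ G, θ j ^ 2)) • h := by
    intro i hi
    rw [hU, hθt, (mem_filter.mp hi).2]
  calc _ ≤ ∑ i ∈ G, (θ i / Real.sqrt (∑ j ∈ G, θ j ^ 2) - inner ℝ h c) ^ 2 :=
        div_card_mul_sum_sq_sub_mean_le G θ (Real.sqrt_pos.mpr hpos)
          ((Real.sq_sqrt hpos.le).trans_le (sum_sq_le_card G fun i _ =>
            abs_le.mpr ⟨by linarith [(hθ i).1], (hθ i).2⟩)) _
    _ ≤ ∑ i ∈ G, ‖U i - c‖ ^ 2 := sum_le_sum fun i hi => by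
        rw [hUG i hi]
        exact sq_sub_inner_le_norm_smul_sub_sq (norm_row_eq_one_of_mul_transpose_eq_one hH k) _ c

/-- Under the DCBM latent-position structure
(`U_i = θ̃_i H_{τ_i}` with `θ̃_i = θ_i / ‖φ_{τ_i}‖`, `H` orthogonal with orthonormal rows,
all communities nonempty), for every community `k` and every `c ∈ ℝ^K`,
`Σ_{i : τ_i = k} ‖U_i − c‖² ≥ (1/n_k) Σ_{i : τ_i = k} (θ_i − θ̄_k)²`. -/
theorem stmt7 {n K : ℕ} (τ : Fin n → Fin K) (hτ : Function.Surjective τ)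
    (θ : Fin n → ℝ) (hθ : ∀ i, θ i ∈ Set.Ioc (0 : ℝ) 1)
    (H : Matrix (Fin K) (Fin K) ℝ) (hH : H * Hᵀ = 1)
    (θt : Fin n → ℝ)
    (hθt : ∀ i, θt i =
      θ i / Real.sqrt (∑ j ∈ Finset.univ.filter (fun l => τ l = τ i), θ j ^ 2))
    (U : Fin n → EuclideanSpace ℝ (Fin K))
    (hU : ∀ i, U i = θt i • (WithLp.equiv 2 (Fin K → ℝ)).symm (H (τ i))) :
    ∀ (k : Fin K) (c : EuclideanSpace ℝ (Fin K)),
      (1 / ((Finset.univ.filter fun i => τ i = k).card : ℝ)) *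
          ∑ i ∈ Finset.univ.filter (fun i => τ i = k),
            (θ i - (∑ j ∈ Finset.univ.filter (fun l => τ l = k), θ j) /
                ((Finset.univ.filter fun l => τ l = k).card : ℝ)) ^ 2
        ≤ ∑ i ∈ Finset.univ.filter (fun i => τ i = k), ‖U i - c‖ ^ 2 :=
  stmt7_general τ θ hθ H hH θt hθt U hU
end

section
/- Let τ : {1,…,n} → {1,…,K} have every community nonempty with 𝒢_k = {i : τ_i = k} and n_k = |𝒢_k|, and let U_1,…,U_n ∈ ℝ^K. Suppose there exist a community k and ε > 0 such that for every subset S ⊆ 𝒢_k with |S| ≥ n_k/K one has Σ_{i∈S} ‖U_i‖² − λ_max(Σ_{i∈S} U_i U_iᵀ) ≥ ε. Then for every assignment {t_i} ∈ {1,…,K}^n and every family Π_1,…,Π_K of orthogonal projection matrices on ℝ^K of rank at most 1, Σ_{i=1}^n ‖(I − Π_{t_i}) U_i‖² ≥ ε. -/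
open Finset Matrix

/-- The action of a `d × d` real matrix on Euclidean space `ℝ^d`. -/
noncomputable def mApply {d : ℕ} (M : Matrix (Fin d) (Fin d) ℝ)
    (x : EuclideanSpace ℝ (Fin d)) : EuclideanSpace ℝ (Fin d) :=
  Matrix.toEuclideanLin M x

open Classical in
/-- The largest eigenvalue of a symmetric real matrix (junk value `0` otherwise). -/
noncomputable def lamMax {d : ℕ} (M : Matrix (Fin d) (Fin d) ℝ) : ℝ :=
  if h : M.IsHermitian then ⨆ j, h.eigenvalues j else 0

/-!
By pigeonhole some label `l` is taken by `t` on a set `S ⊆ 𝒢_k` with `|S| ≥ n_k / K`, and the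
sum over `S` alone already bounds the total. For an orthogonal projection `Π`,
`‖(I - Π) u‖² = ‖u‖² - tr(Π u uᵀ)`, so that partial sum is `Σ_S ‖U_i‖² - tr(Π M)` with
`M = Σ_S U_i U_iᵀ`. Diagonalising `M` writes `tr(Π M)` as a combination of its eigenvalues with
nonnegative weights summing to `tr Π = rank Π ≤ 1`, hence `tr(Π M) ≤ λ_max(M)`.
-/

namespace Matrix

variable {n : Type*} [Fintype n]

theorem trace_eq_rank_of_isIdempotentElem [DecidableEq n] {𝕜 : Type*} [Field 𝕜] [CharZero 𝕜]
    {P : Matrix n n 𝕜} (hP : IsIdempotentElem P) : P.trace = P.rank := by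
  have hL : IsIdempotentElem (toLin' P) := hP.map toLinAlgEquiv'
  rw [← trace_toLin'_eq, ((LinearMap.isProj_range_iff_isIdempotentElem _).mpr hL).trace]
  rfl

theorem posSemidef_of_isSymm_of_isIdempotentElem {P : Matrix n n ℝ} (hS : P.IsSymm)
    (hI : IsIdempotentElem P) : P.PosSemidef := by
  have hP : P = Pᴴ * P := by rw [conjTranspose_eq_transpose_of_trivial, hS.eq, hI.eq]
  rw [hP]
  exact posSemidef_conjTranspose_mul_self P

theorem dotProduct_mulVec_self_of_isSymm_of_isIdempotentElem {P : Matrix n n ℝ} (hS : P.IsSymm)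
    (hI : IsIdempotentElem P) (x : n → ℝ) : (P *ᵥ x) ⬝ᵥ (P *ᵥ x) = x ⬝ᵥ (P *ᵥ x) := by
  rw [dotProduct_mulVec, ← mulVec_transpose, hS.eq, mulVec_mulVec, hI.eq, dotProduct_comm]

theorem IsHermitian.trace_mul_le [DecidableEq n] {P M : Matrix n n ℝ} (hP : P.PosSemidef)
    (hM : M.IsHermitian) : (P * M).trace ≤ P.trace * ⨆ j, hM.eigenvalues j := by
  set V : Matrix n n ℝ := (hM.eigenvectorUnitary : Matrix n n ℝ)
  have hVV : V * star V = 1 := (mem_unitaryGroup_iff).mp hM.eigenvectorUnitary.2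
  have hQ : (star V * P * V).PosSemidef := by
    simpa [star_eq_conjTranspose] using hP.conjTranspose_mul_mul_same V
  have htrace : (P * M).trace = ∑ j, (star V * P * V) j j * hM.eigenvalues j := by
    conv_lhs => rw [hM.spectral_theorem, Unitary.conjStarAlgAut_apply]
    rw [← mul_assoc, trace_mul_comm, ← mul_assoc, ← mul_assoc]
    simp only [trace, RCLike.ofReal_real_eq_id, CompTriple.comp_eq, diag_apply, mul_diagonal]
    rfl
  have hweights : ∑ j, (star V * P * V) j j = P.trace := by
    show (star V * P * V).trace = _
    rw [trace_mul_cycle, hVV, one_mul]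
  calc (P * M).trace = ∑ j, (star V * P * V) j j * hM.eigenvalues j := htrace
    _ ≤ ∑ j, (star V * P * V) j j * ⨆ j, hM.eigenvalues j :=
      sum_le_sum fun j _ => mul_le_mul_of_nonneg_left
        (le_ciSup (Set.finite_range _).bddAbove j) hQ.diag_nonneg
    _ = P.trace * ⨆ j, hM.eigenvalues j := by rw [← sum_mul, hweights]

end Matrix

theorem EuclideanSpace.real_norm_sq_eq_dotProduct {n : Type*} [Fintype n]
    (x : EuclideanSpace ℝ n) : ‖x‖ ^ 2 = (x : n → ℝ) ⬝ᵥ x := by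
  rw [EuclideanSpace.real_norm_sq_eq]
  simp [dotProduct, sq]

theorem trace_mul_le_lamMax {d : ℕ} {P M : Matrix (Fin d) (Fin d) ℝ} (hP : P.PosSemidef)
    (hP1 : P.trace ≤ 1) (hM : M.PosSemidef) : (P * M).trace ≤ lamMax M := by
  rw [lamMax, dif_pos hM.isHermitian]
  calc (P * M).trace ≤ P.trace * ⨆ j, hM.isHermitian.eigenvalues j :=
        hM.isHermitian.trace_mul_le hP
    _ ≤ ⨆ j, hM.isHermitian.eigenvalues j :=
        mul_le_of_le_one_left (Real.iSup_nonneg hM.eigenvalues_nonneg) hP1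

theorem norm_sq_mApply_one_sub {d : ℕ} {P : Matrix (Fin d) (Fin d) ℝ} (hS : P.IsSymm)
    (hI : IsIdempotentElem P) (x : EuclideanSpace ℝ (Fin d)) :
    ‖mApply (1 - P) x‖ ^ 2 = ‖x‖ ^ 2 - (P * vecMulVec x x).trace := by
  have hx : (mApply (1 - P) x : Fin d → ℝ) = x - P *ᵥ x := by simp [mApply]
  rw [EuclideanSpace.real_norm_sq_eq_dotProduct, EuclideanSpace.real_norm_sq_eq_dotProduct, hx,
    mul_vecMulVec, trace_vecMulVec, sub_dotProduct, dotProduct_sub, dotProduct_sub,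
    dotProduct_mulVec_self_of_isSymm_of_isIdempotentElem hS hI, dotProduct_comm (P *ᵥ _)]
  ring

theorem stmt13_general {n K : ℕ} (τ : Fin n → Fin K)
    (U : Fin n → EuclideanSpace ℝ (Fin K)) (k : Fin K) (ε : ℝ)
    (hsub : ∀ S : Finset (Fin n), (∀ i ∈ S, τ i = k) →
      ((Finset.univ.filter fun i => τ i = k).card : ℝ) / (K : ℝ) ≤ (S.card : ℝ) →
      ε ≤ (∑ i ∈ S, ‖U i‖ ^ 2) - lamMax (∑ i ∈ S, Matrix.of fun a b => U i a * U i b)) :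
    ∀ (t : Fin n → Fin K) (Pj : Fin K → Matrix (Fin K) (Fin K) ℝ),
      (∀ l, (Pj l).IsSymm) → (∀ l, Pj l * Pj l = Pj l) → (∀ l, (Pj l).rank ≤ 1) →
      ε ≤ ∑ i, ‖mApply (1 - Pj (t i)) (U i)‖ ^ 2 := by
  intro t Pj hsym hidem hrank
  set G := univ.filter fun i => τ i = k
  obtain ⟨l, -, hl⟩ : ∃ l ∈ (univ : Finset (Fin K)), (#G : ℝ) / K ≤ #{i ∈ G | t i = l} :=
    exists_le_card_fiber_of_nsmul_le_card_of_maps_to (fun i _ => mem_univ (t i)) ⟨k, mem_univ k⟩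
      (by simp [mul_div_cancel₀ _ (Nat.cast_ne_zero.mpr k.pos.ne' : (K : ℝ) ≠ 0)])
  set S := {i ∈ G | t i = l}
  set M := ∑ i ∈ S, vecMulVec (U i) (U i)
  have hM : M.PosSemidef := posSemidef_sum S fun i _ => posSemidef_vecMulVec_self_star (U i)
  have hP := posSemidef_of_isSymm_of_isIdempotentElem (hsym l) (hidem l)
  have htr : (Pj l).trace ≤ 1 := by
    rw [trace_eq_rank_of_isIdempotentElem (hidem l)]
    exact_mod_cast hrank l
  calc ε ≤ ∑ i ∈ S, ‖U i‖ ^ 2 - lamMax M :=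
        hsub S (fun i hi => (mem_filter.mp (mem_filter.mp hi).1).2) hl
    _ ≤ ∑ i ∈ S, ‖U i‖ ^ 2 - (Pj l * M).trace := by
        gcongr
        exact trace_mul_le_lamMax hP htr hM
    _ = ∑ i ∈ S, ‖mApply (1 - Pj l) (U i)‖ ^ 2 := by
        rw [mul_sum, trace_sum, ← sum_sub_distrib]
        exact sum_congr rfl fun i _ => (norm_sq_mApply_one_sub (hsym l) (hidem l) (U i)).symm
    _ = ∑ i ∈ S, ‖mApply (1 - Pj (t i)) (U i)‖ ^ 2 :=
        sum_congr rfl fun i hi => by rw [(mem_filter.mp hi).2]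
    _ ≤ ∑ i, ‖mApply (1 - Pj (t i)) (U i)‖ ^ 2 :=
        sum_le_sum_of_subset_of_nonneg (subset_univ S) fun i _ _ => by positivity

/-- Let `τ` have all communities nonempty and `U_1, …, U_n ∈ ℝ^K`.  If for
some community `k` and some `ε > 0`, every subset `S ⊆ 𝒢_k` with `|S| ≥ n_k/K` satisfies
`Σ_{i∈S} ‖U_i‖² − λ_max(Σ_{i∈S} U_i U_iᵀ) ≥ ε`, then for every assignment `{t_i}` and every
family of rank-at-most-one orthogonal projections `Π_1, …, Π_K` on `ℝ^K`,
`Σ_i ‖(I − Π_{t_i}) U_i‖² ≥ ε`. -/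
theorem stmt13 {n K : ℕ} (τ : Fin n → Fin K) (hτ : Function.Surjective τ)
    (U : Fin n → EuclideanSpace ℝ (Fin K)) (k : Fin K) (ε : ℝ) (hε : 0 < ε)
    (hsub : ∀ S : Finset (Fin n), (∀ i ∈ S, τ i = k) →
      ((Finset.univ.filter fun i => τ i = k).card : ℝ) / (K : ℝ) ≤ (S.card : ℝ) →
      ε ≤ (∑ i ∈ S, ‖U i‖ ^ 2) - lamMax (∑ i ∈ S, Matrix.of fun a b => U i a * U i b)) :
    ∀ (t : Fin n → Fin K) (Pj : Fin K → Matrix (Fin K) (Fin K) ℝ),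
      (∀ l, (Pj l).IsSymm) → (∀ l, Pj l * Pj l = Pj l) → (∀ l, (Pj l).rank ≤ 1) →
      ε ≤ ∑ i, ‖mApply (1 - Pj (t i)) (U i)‖ ^ 2 :=
  stmt13_general τ U k ε hsub
end

section
/- Let τ : {1,…,n} → {1,…,K} and let Λ ∈ ℝ^{n×K} with entries λ_{ik}. Define the n×n matrix P by P_{ij} = λ_{i τ_j} · λ_{j τ_i} for all i, j (including i = j). Then rank(P) ≤ K². -/
open Matrix

/-!
Writing `P i j = Λ i (τ j) * Λ j (τ i)` as `∑_{(k, l)} (Λ i k [τ i = l]) ([τ j = k] Λ j l)` factors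
`P` through the `K²`-dimensional space indexed by community pairs, which bounds its rank.
-/

namespace Matrix

variable {m n κ₁ κ₂ R : Type*} [Fintype κ₁] [Fintype κ₂] [DecidableEq κ₁] [DecidableEq κ₂]

theorem of_mul_apply_comp_eq_mul [CommSemiring R] (σ : m → κ₂) (τ : n → κ₁)
    (f : m → κ₁ → R) (g : n → κ₂ → R) :
    of (fun i j => f i (τ j) * g j (σ i)) =
      of (fun i (p : κ₁ × κ₂) => f i p.1 * if σ i = p.2 then 1 else 0) *
        of (fun (p : κ₁ × κ₂) j => (if τ j = p.1 then 1 else 0) * g j p.2) := by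
  ext i j
  rw [mul_apply, Fintype.sum_prod_type, Fintype.sum_eq_single (τ j), Fintype.sum_eq_single (σ i)]
  · simp
  · intro l hl
    simp [Ne.symm hl]
  · intro k hk
    simp [Ne.symm hk]

theorem rank_of_mul_apply_comp_le [Fintype n] [CommSemiring R] [StrongRankCondition R]
    (σ : m → κ₂) (τ : n → κ₁) (f : m → κ₁ → R) (g : n → κ₂ → R) :
    (of fun i j => f i (τ j) * g j (σ i)).rank ≤ Fintype.card κ₁ * Fintype.card κ₂ := by
  rw [of_mul_apply_comp_eq_mul, ← Fintype.card_prod]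
  exact (rank_mul_le_left _ _).trans (rank_le_card_width _)

end Matrix

/-- The full edge-probability matrix of a PABM with `K` communities,
`P_{ij} = λ_{i τ_j} λ_{j τ_i}`, has rank at most `K²`. -/
theorem stmt16 {n K : ℕ} (τ : Fin n → Fin K) (Λ : Matrix (Fin n) (Fin K) ℝ)
    (P : Matrix (Fin n) (Fin n) ℝ) (hP : ∀ i j, P i j = Λ i (τ j) * Λ j (τ i)) :
    P.rank ≤ K ^ 2 := by
  have hP' : P = of fun i j => Λ i (τ j) * Λ j (τ i) := ext hP
  rw [hP', sq]
  simpa using rank_of_mul_apply_comp_le τ τ Λ Λ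
end

section
/- Let τ : {1,…,n} → {1,…,K} have every community nonempty with 𝒢_k = {i : τ_i = k}, and let U_1,…,U_n ∈ ℝ^{K²} satisfy Σ_{i∈𝒢_k} ‖U_i‖² = K for every k. Suppose Γ_1,…,Γ_K are orthogonal projection matrices on ℝ^{K²} with Γ_k U_i = U_i for all i ∈ 𝒢_k. Then for any vectors Û_1,…,Û_n ∈ ℝ^{K²} and any orthogonal projection matrices Π_1,…,Π_K on ℝ^{K²}, Σ_{k=1}^K Σ_{i∈𝒢_k} ‖(I − Π_k) Û_i‖² ≤ 2 Σ_{i=1}^n ‖Û_i − U_i‖² + 2K Σ_{k=1}^K ‖Π_k − Γ_k‖², where ‖Π_k − Γ_k‖ denotes the spectral (operator) norm. -/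
/-!
For `i ∈ 𝒢_k` write `Û_i = (Û_i - U_i) + U_i`. The projection `I - Π_k` contracts the first
summand, and since `Γ_k U_i = U_i` it acts on the second as `Γ_k - Π_k`, so
`‖(I - Π_k) Û_i‖ ≤ ‖Û_i - U_i‖ + ‖Π_k - Γ_k‖ ‖U_i‖`. Squaring with `(a + b)² ≤ 2a² + 2b²` and
summing over each community, the normalisation `Σ_{i∈𝒢_k} ‖U_i‖² = K` gives the bound.
-/

open Finset Matrix

/-- The spectral (ℓ₂ operator) norm of a real square matrix. -/
noncomputable def specNorm {d : ℕ} (M : Matrix (Fin d) (Fin d) ℝ) : ℝ :=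
  ‖Matrix.toEuclideanCLM (𝕜 := ℝ) M‖

lemma Matrix.isStarProjection_of_isSymm {n α : Type*} [Fintype n] [Semiring α] [Star α]
    [TrivialStar α] {M : Matrix n n α} (hs : M.IsSymm) (hi : M * M = M) :
    IsStarProjection M :=
  ⟨hi, isHermitian_iff_isSymm.2 hs⟩

lemma mApply_eq_toEuclideanCLM {d : ℕ} (M : Matrix (Fin d) (Fin d) ℝ)
    (x : EuclideanSpace ℝ (Fin d)) :
    mApply M x = toEuclideanCLM (𝕜 := ℝ) M x := rfl

section

variable {𝕜 E : Type*} [RCLike 𝕜] [NormedAddCommGroup E] [InnerProductSpace 𝕜 E]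
  [CompleteSpace E]

theorem IsStarProjection.norm_apply_le {P : E →L[𝕜] E} (hP : IsStarProjection P) (x : E) :
    ‖P x‖ ≤ ‖x‖ :=
  P.le_of_opNorm_le (hP.norm_le P) x |>.trans_eq (one_mul _)

theorem IsStarProjection.norm_one_sub_apply_le {P G : E →L[𝕜] E} (hP : IsStarProjection P)
    {u : E} (hu : G u = u) (x : E) :
    ‖(1 - P) x‖ ≤ ‖x - u‖ + ‖P - G‖ * ‖u‖ := by
  have hsplit : (1 - P) x = (1 - P) (x - u) + (G - P) u := by
    simp [hu]; abel
  calc ‖(1 - P) x‖ ≤ ‖(1 - P) (x - u)‖ + ‖(G - P) u‖ := hsplit ▸ norm_add_le _ _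
    _ ≤ ‖x - u‖ + ‖P - G‖ * ‖u‖ := by
      gcongr
      · exact hP.one_sub.norm_apply_le _
      · exact norm_sub_rev G P ▸ (G - P).le_opNorm u

theorem IsStarProjection.norm_one_sub_apply_sq_le {P G : E →L[𝕜] E} (hP : IsStarProjection P)
    {u : E} (hu : G u = u) (x : E) :
    ‖(1 - P) x‖ ^ 2 ≤ 2 * ‖x - u‖ ^ 2 + 2 * ‖P - G‖ ^ 2 * ‖u‖ ^ 2 :=
  calc ‖(1 - P) x‖ ^ 2 ≤ (‖x - u‖ + ‖P - G‖ * ‖u‖) ^ 2 := by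
        gcongr; exact hP.norm_one_sub_apply_le hu x
    _ ≤ 2 * (‖x - u‖ ^ 2 + (‖P - G‖ * ‖u‖) ^ 2) := add_sq_le
    _ = 2 * ‖x - u‖ ^ 2 + 2 * ‖P - G‖ ^ 2 * ‖u‖ ^ 2 := by ring

end

theorem stmt17_general {n K : ℕ} (τ : Fin n → Fin K)
    (U : Fin n → EuclideanSpace ℝ (Fin (K ^ 2)))
    (hUnorm : ∀ k : Fin K,
      ∑ i ∈ Finset.univ.filter (fun i => τ i = k), ‖U i‖ ^ 2 = (K : ℝ))
    (Γ : Fin K → Matrix (Fin (K ^ 2)) (Fin (K ^ 2)) ℝ)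
    (hΓU : ∀ k : Fin K, ∀ i ∈ Finset.univ.filter (fun i => τ i = k),
      mApply (Γ k) (U i) = U i)
    (Uh : Fin n → EuclideanSpace ℝ (Fin (K ^ 2)))
    (Pj : Fin K → Matrix (Fin (K ^ 2)) (Fin (K ^ 2)) ℝ)
    (hPjsym : ∀ k, (Pj k).IsSymm) (hPjidem : ∀ k, Pj k * Pj k = Pj k) :
    ∑ k : Fin K, ∑ i ∈ Finset.univ.filter (fun i => τ i = k),
        ‖mApply (1 - Pj k) (Uh i)‖ ^ 2
      ≤ 2 * (∑ i, ‖Uh i - U i‖ ^ 2) +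
          2 * (K : ℝ) * ∑ k : Fin K, specNorm (Pj k - Γ k) ^ 2 := by
  have hproj k : IsStarProjection (toEuclideanCLM (𝕜 := ℝ) (Pj k)) :=
    (isStarProjection_of_isSymm (hPjsym k) (hPjidem k)).map _
  calc ∑ k, ∑ i ∈ univ.filter (τ · = k), ‖mApply (1 - Pj k) (Uh i)‖ ^ 2
      ≤ ∑ k, ∑ i ∈ univ.filter (τ · = k),
          (2 * ‖Uh i - U i‖ ^ 2 + 2 * specNorm (Pj k - Γ k) ^ 2 * ‖U i‖ ^ 2) := by
        gcongr with k _ i hi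
        rw [mApply_eq_toEuclideanCLM, specNorm, map_sub, map_sub, map_one]
        exact (hproj k).norm_one_sub_apply_sq_le (hΓU k i hi) (Uh i)
    _ = 2 * ∑ k, ∑ i ∈ univ.filter (τ · = k), ‖Uh i - U i‖ ^ 2
          + 2 * ∑ k, specNorm (Pj k - Γ k) ^ 2 * ∑ i ∈ univ.filter (τ · = k), ‖U i‖ ^ 2 := by
        simp only [sum_add_distrib, mul_sum, mul_assoc]
    _ = 2 * (∑ i, ‖Uh i - U i‖ ^ 2) + 2 * K * ∑ k, specNorm (Pj k - Γ k) ^ 2 := by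
        simp only [sum_fiberwise, hUnorm, ← sum_mul]
        ring

/-- PABM latent-position structure: `τ` has all communities nonempty,
`U_i ∈ ℝ^{K²}` with `Σ_{i∈𝒢_k} ‖U_i‖² = K` for each `k`, and `Γ_k` orthogonal projections
with `Γ_k U_i = U_i` for `i ∈ 𝒢_k`.  Then for any points `Û_i` and any orthogonal projections
`Π_1, …, Π_K` on `ℝ^{K²}`,
`Σ_k Σ_{i∈𝒢_k} ‖(I − Π_k) Û_i‖² ≤ 2 Σ_i ‖Û_i − U_i‖² + 2K Σ_k ‖Π_k − Γ_k‖²`,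
with `‖·‖` the spectral norm on matrices. -/
theorem stmt17 {n K : ℕ} (τ : Fin n → Fin K) (hτ : Function.Surjective τ)
    (U : Fin n → EuclideanSpace ℝ (Fin (K ^ 2)))
    (hUnorm : ∀ k : Fin K,
      ∑ i ∈ Finset.univ.filter (fun i => τ i = k), ‖U i‖ ^ 2 = (K : ℝ))
    (Γ : Fin K → Matrix (Fin (K ^ 2)) (Fin (K ^ 2)) ℝ)
    (hΓsym : ∀ k, (Γ k).IsSymm) (hΓidem : ∀ k, Γ k * Γ k = Γ k)
    (hΓU : ∀ k : Fin K, ∀ i ∈ Finset.univ.filter (fun i => τ i = k),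
      mApply (Γ k) (U i) = U i)
    (Uh : Fin n → EuclideanSpace ℝ (Fin (K ^ 2)))
    (Pj : Fin K → Matrix (Fin (K ^ 2)) (Fin (K ^ 2)) ℝ)
    (hPjsym : ∀ k, (Pj k).IsSymm) (hPjidem : ∀ k, Pj k * Pj k = Pj k) :
    ∑ k : Fin K, ∑ i ∈ Finset.univ.filter (fun i => τ i = k),
        ‖mApply (1 - Pj k) (Uh i)‖ ^ 2
      ≤ 2 * (∑ i, ‖Uh i - U i‖ ^ 2) +
          2 * (K : ℝ) * ∑ k : Fin K, specNorm (Pj k - Γ k) ^ 2 :=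
  stmt17_general τ U hUnorm Γ hΓU Uh Pj hPjsym hPjidem
end
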